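/- For 1 ≤ p < ∞, α ∈ (0,1), and the Tail Value-at-Risk acceptance set A^α = {X ∈ L^p : TVaR_α(X) ≤ 0}, the following are equivalent for a traded asset S = (S_0, S_T) with S_T ∈ L^p_+ nonzero: (a) ρ_{A^α,S} is finitely valued on L^p; (b) ρ_{A^α,S} is Lipschitz continuous on L^p; (c) TVaR_α(S_T) < 0; (d) P(S_T = 0) < α. -/

import Mathlib

/-!
Write `q` for the upper quantile function of `X`, so that `VaR_β(X) = -q(β)`. Lebesgue measure
on `(0, α)` pushed forward by `q` is the law of `X` under `Z* · P`, where `Z* = 1` on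
`{X < q(α)}`, `Z* = 0` on `{X > q(α)}`, and the atom `{X = q(α)}` gets the fractional weight
that makes the total mass `α`. Hence `TVaR_α(X) = -(1/α) ∫ X Z*`, and by the bathtub principle
`Z*` minimises `∫ X Z` over all `[0, 1]`-valued `Z` of mass `α`. So `TVaR_α` is a maximum of
linear functionals: it is sublinear and `1/α`-Lipschitz on `Lᵖ`.

If `TVaR_α(S_T) < 0`, the capital `r` that makes `x + (r / S_0) S_T` acceptable is bounded below,
and a shift of `r` by a multiple of `‖x - y‖` turns a solution for `y` into a solution for `x`.
So `ρ` is real-valued and Lipschitz. If `P(S_T = 0) ≥ α`, a weight of mass `α` carried by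
`{S_T = 0}` gives `TVaR_α(-1 + c S_T) ≥ 1` for every `c`, so `ρ(-1) = +∞`. If `P(S_T = 0) < α`,
then `∫ S_T Z* > 0`, because `Z*` cannot fit all of its mass `α` into `{S_T = 0}`.
-/

open MeasureTheory Filter Topology ENNReal

open Set

section UpperQuantile

variable {Ω : Type*} {mΩ : MeasurableSpace Ω} {μ : Measure Ω} {f : Ω → ℝ} {β t : ℝ}

noncomputable def upperQuantile (μ : Measure Ω) (f : Ω → ℝ) (β : ℝ) : ℝ :=
  sSup {t | μ {ω | f ω < t} ≤ ENNReal.ofReal β}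

theorem monotone_setOf_lt (f : Ω → ℝ) : Monotone fun t : ℝ => {ω | f ω < t} :=
  fun _ _ hst _ hω => lt_of_lt_of_le hω hst

theorem measure_lt_le_of_forall_lt {b : ℝ≥0∞} (h : ∀ s < t, μ {ω | f ω < s} ≤ b) :
    μ {ω | f ω < t} ≤ b := by
  have hU : {ω | f ω < t} = ⋃ n : ℕ, {ω | f ω < t - 1 / (n + 1)} := by
    ext ω
    simp only [mem_ofPred_eq, mem_iUnion]
    refine ⟨fun hω => ?_, fun ⟨n, hn⟩ => hn.trans (sub_lt_self _ Nat.one_div_pos_of_nat)⟩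
    obtain ⟨n, hn⟩ := exists_nat_one_div_lt (sub_pos.2 hω)
    exact ⟨n, by linarith⟩
  have hmono : Monotone fun n : ℕ => {ω | f ω < t - 1 / (n + 1)} := fun m n hmn =>
    monotone_setOf_lt f (sub_le_sub_left (Nat.one_div_le_one_div hmn) t)
  rw [hU, hmono.measure_iUnion]
  exact iSup_le fun n => h _ (sub_lt_self _ Nat.one_div_pos_of_nat)

theorem exists_measure_lt_le [IsFiniteMeasure μ] (hf : Measurable f) (hβ : 0 < β) :
    ∃ t, μ {ω | f ω < t} ≤ ENNReal.ofReal β := by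
  have hempty : ⋂ t : ℝ, {ω | f ω < t} = ∅ :=
    eq_empty_of_forall_notMem fun ω hω => lt_irrefl (f ω) (mem_iInter.1 hω (f ω))
  have h := tendsto_measure_iInter_atBot (μ := μ)
    (fun t => (measurableSet_lt hf measurable_const).nullMeasurableSet) (monotone_setOf_lt f)
    ⟨0, measure_ne_top _ _⟩
  rw [hempty, measure_empty] at h
  exact (h.eventually (gt_mem_nhds (ENNReal.ofReal_pos.2 hβ))).exists.imp fun _ => le_of_lt

variable [IsProbabilityMeasure μ]

theorem exists_lt_measure_lt (hβ : β < 1) : ∃ t, ENNReal.ofReal β < μ {ω | f ω < t} := by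
  have huniv : ⋃ t : ℝ, {ω | f ω < t} = univ :=
    eq_univ_of_forall fun ω => mem_iUnion.2 ⟨f ω + 1, by simp⟩
  have h := tendsto_measure_iUnion_atTop (μ := μ) (monotone_setOf_lt f)
  rw [huniv, measure_univ] at h
  exact (h.eventually (lt_mem_nhds (ENNReal.ofReal_lt_one.2 hβ))).exists

theorem le_upperQuantile_iff (hf : Measurable f) (hβ0 : 0 < β) (hβ1 : β < 1) :
    t ≤ upperQuantile μ f β ↔ μ {ω | f ω < t} ≤ ENNReal.ofReal β := by
  have hbdd : BddAbove {t | μ {ω | f ω < t} ≤ ENNReal.ofReal β} := by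
    obtain ⟨t₀, ht₀⟩ := exists_lt_measure_lt (μ := μ) (f := f) hβ1
    exact ⟨t₀, fun s hs => le_of_not_gt fun hlt =>
      (ht₀.trans_le (measure_mono (monotone_setOf_lt f hlt.le))).not_ge hs⟩
  refine ⟨fun ht => measure_lt_le_of_forall_lt fun s hs => ?_, fun h => le_csSup hbdd h⟩
  obtain ⟨u, hu, hsu⟩ := exists_lt_of_lt_csSup (exists_measure_lt_le hf hβ0) (hs.trans_le ht)
  exact (measure_mono (monotone_setOf_lt f hsu.le)).trans hu

theorem upperQuantile_lt_iff (hf : Measurable f) (hβ0 : 0 < β) (hβ1 : β < 1) :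
    upperQuantile μ f β < t ↔ ENNReal.ofReal β < μ {ω | f ω < t} := by
  rw [← not_le, le_upperQuantile_iff hf hβ0 hβ1, not_le]

theorem measure_lt_upperQuantile_le (hf : Measurable f) (hβ0 : 0 < β) (hβ1 : β < 1) :
    μ {ω | f ω < upperQuantile μ f β} ≤ ENNReal.ofReal β :=
  (le_upperQuantile_iff hf hβ0 hβ1).1 le_rfl

theorem le_measure_le_upperQuantile (hf : Measurable f) (hβ0 : 0 < β) (hβ1 : β < 1) :
    ENNReal.ofReal β ≤ μ {ω | f ω ≤ upperQuantile μ f β} := by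
  set v := upperQuantile μ f β
  have hI : ⋂ r > v, {ω | f ω < r} = {ω | f ω ≤ v} := by
    ext ω
    simp only [mem_iInter, mem_ofPred_eq]
    exact forall_gt_iff_le
  have h := tendsto_measure_biInter_gt (μ := μ) (a := v)
    (fun r _ => (measurableSet_lt hf measurable_const).nullMeasurableSet)
    (fun _ _ _ hij => monotone_setOf_lt f hij) ⟨v + 1, by linarith, measure_ne_top _ _⟩
  rw [hI] at h
  exact ge_of_tendsto h (eventually_nhdsWithin_of_forall fun r hr =>
    ((upperQuantile_lt_iff hf hβ0 hβ1).1 hr).le)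

theorem monotoneOn_upperQuantile (hf : Measurable f) :
    MonotoneOn (upperQuantile μ f) (Ioo 0 1) := fun _ hβ _ hγ hβγ =>
  (le_upperQuantile_iff hf hγ.1 hγ.2).2 ((measure_lt_upperQuantile_le hf hβ.1 hβ.2).trans
    (ENNReal.ofReal_le_ofReal hβγ))

end UpperQuantile

section TailDensity

variable {Ω : Type*} {mΩ : MeasurableSpace Ω} {μ : Measure Ω} {f Z : Ω → ℝ} {α : ℝ}

structure IsTailDensity (μ : Measure Ω) (α : ℝ) (Z : Ω → ℝ) : Prop where
  measurable : Measurable Z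
  mem_Icc : ∀ ω, Z ω ∈ Icc (0 : ℝ) 1
  integral_eq : ∫ ω, Z ω ∂μ = α

theorem IsTailDensity.integrable [IsFiniteMeasure μ] (hZ : IsTailDensity μ α Z) :
    Integrable Z μ :=
  .of_bound hZ.measurable.aestronglyMeasurable 1 (ae_of_all _ fun ω => by
    rw [Real.norm_eq_abs, abs_of_nonneg (hZ.mem_Icc ω).1]
    exact (hZ.mem_Icc ω).2)

theorem IsTailDensity.integrable_mul (hZ : IsTailDensity μ α Z) {g : Ω → ℝ}
    (hg : Integrable g μ) : Integrable (fun ω => g ω * Z ω) μ :=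
  hg.mul_bdd hZ.measurable.aestronglyMeasurable (ae_of_all _ fun ω => by
    rw [Real.norm_eq_abs, abs_of_nonneg (hZ.mem_Icc ω).1]
    exact (hZ.mem_Icc ω).2)

/-- On a `μ`-null atom this is `0 / 0 = 0`, which is harmless: then
`μ {f < upperQuantile μ f α} = α`. -/
noncomputable def tailAtomWeight (μ : Measure Ω) (f : Ω → ℝ) (α : ℝ) : ℝ :=
  (α - μ.real {ω | f ω < upperQuantile μ f α}) / μ.real {ω | f ω = upperQuantile μ f α}

noncomputable def tailDensity (μ : Measure Ω) (f : Ω → ℝ) (α : ℝ) (ω : Ω) : ℝ :=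
  if f ω < upperQuantile μ f α then 1
  else if f ω = upperQuantile μ f α then tailAtomWeight μ f α else 0

variable [IsProbabilityMeasure μ]

theorem aemeasurable_upperQuantile (hf : Measurable f) (hα1 : α ≤ 1) :
    AEMeasurable (upperQuantile μ f) (volume.restrict (Ioo 0 α)) :=
  aemeasurable_restrict_of_monotoneOn measurableSet_Ioo
    ((monotoneOn_upperQuantile hf).mono (Ioo_subset_Ioo_right hα1))

variable (hf : Measurable f) (hα0 : 0 < α) (hα1 : α < 1)
include hf hα0 hα1

theorem tailAtomWeight_mem_Icc_and_eq :
    tailAtomWeight μ f α ∈ Icc (0 : ℝ) 1 ∧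
      μ.real {ω | f ω < upperQuantile μ f α} +
        tailAtomWeight μ f α * μ.real {ω | f ω = upperQuantile μ f α} = α := by
  set v := upperQuantile μ f α
  have hlt : μ.real {ω | f ω < v} ≤ α :=
    ENNReal.toReal_le_of_le_ofReal hα0.le (measure_lt_upperQuantile_le hf hα0 hα1)
  have hle : α ≤ μ.real {ω | f ω < v} + μ.real {ω | f ω = v} := by
    have hsplit : {ω | f ω ≤ v} = {ω | f ω < v} ∪ {ω | f ω = v} := by
      ext ω; exact le_iff_lt_or_eq (a := f ω)
    have h := le_measure_le_upperQuantile (μ := μ) hf hα0 hα1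
    rw [hsplit, measure_union (fun s h₁ h₂ ω hω => (h₁ hω).ne (h₂ hω))
      (measurableSet_eq_fun hf measurable_const)] at h
    rw [measureReal_def, measureReal_def, ← ENNReal.toReal_add (measure_ne_top _ _)
      (measure_ne_top _ _)]
    exact (ENNReal.ofReal_le_iff_le_toReal (by finiteness)).1 h
  unfold tailAtomWeight
  rcases eq_or_lt_of_le (measureReal_nonneg : 0 ≤ μ.real {ω | f ω = v}) with h0 | hpos
  · rw [← h0, _root_.div_zero, zero_mul, add_zero]
    exact ⟨⟨le_rfl, zero_le_one⟩, le_antisymm hlt (by linarith)⟩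
  · refine ⟨⟨div_nonneg (by linarith) hpos.le, (div_le_one hpos).2 (by linarith)⟩, ?_⟩
    rw [div_mul_cancel₀ _ hpos.ne']
    ring

theorem isTailDensity_tailDensity : IsTailDensity μ α (tailDensity μ f α) := by
  obtain ⟨hw, hmass⟩ := tailAtomWeight_mem_Icc_and_eq (μ := μ) hf hα0 hα1
  set v := upperQuantile μ f α
  have hlt : MeasurableSet {ω | f ω < v} := measurableSet_lt hf measurable_const
  have heq : MeasurableSet {ω | f ω = v} := measurableSet_eq_fun hf measurable_const
  have hind : tailDensity μ f α = fun ω => {ω | f ω < v}.indicator 1 ω +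
      {ω | f ω = v}.indicator (fun _ => tailAtomWeight μ f α) ω := by
    ext ω
    by_cases h₁ : f ω < v
    · simp [tailDensity, v, h₁, h₁.ne]
    · by_cases h₂ : f ω = v <;> simp [tailDensity, v, h₁, h₂]
  refine ⟨hind ▸ (measurable_const.indicator hlt).add (measurable_const.indicator heq),
    fun ω => ?_, ?_⟩
  · unfold tailDensity
    split_ifs
    exacts [⟨zero_le_one, le_rfl⟩, hw, ⟨le_rfl, zero_le_one⟩]
  · rw [hind, integral_add ((integrable_const _).indicator hlt)
      ((integrable_const _).indicator heq), Pi.one_def, integral_indicator_const _ hlt,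
      integral_indicator_const _ heq, smul_eq_mul, smul_eq_mul, mul_one, mul_comm, hmass]

theorem withDensity_tailDensity_setOf_lt (t : ℝ) :
    μ.withDensity (fun ω => ENNReal.ofReal (tailDensity μ f α ω)) {ω | f ω < t} =
      min (μ {ω | f ω < t}) (ENNReal.ofReal α) := by
  have hZ := isTailDensity_tailDensity (μ := μ) hf hα0 hα1
  set v := upperQuantile μ f α
  rw [withDensity_apply _ (measurableSet_lt hf measurable_const)]
  rcases le_or_gt t v with htv | hvt
  · rw [min_eq_left ((measure_mono (monotone_setOf_lt f htv)).trans
      (measure_lt_upperQuantile_le hf hα0 hα1)),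
      setLIntegral_congr_fun (g := fun _ => 1) (measurableSet_lt hf measurable_const)
        fun ω (hω : f ω < t) => by simp [tailDensity, v, hω.trans_le htv]]
    simp
  · have hsupp : (fun ω => ENNReal.ofReal (tailDensity μ f α ω)).support ⊆ {ω | f ω < t} := by
      intro ω hω
      by_contra hωt
      have hvω : v < f ω := hvt.trans_le (not_lt.1 hωt)
      simp [tailDensity, v, hvω.not_gt, hvω.ne'] at hω
    rw [min_eq_right ((upperQuantile_lt_iff hf hα0 hα1).1 hvt).le,
      setLIntegral_eq_of_support_subset hsupp, ← ofReal_integral_eq_lintegral_ofReal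
        hZ.integrable (ae_of_all _ fun ω => (hZ.mem_Icc ω).1), hZ.integral_eq]

theorem map_withDensity_tailDensity :
    (μ.withDensity fun ω => ENNReal.ofReal (tailDensity μ f α ω)).map f =
      (volume.restrict (Ioo 0 α)).map (upperQuantile μ f) := by
  have hZ := isTailDensity_tailDensity (μ := μ) hf hα0 hα1
  have hq := aemeasurable_upperQuantile (μ := μ) hf hα1.le
  have hmass : μ.withDensity (fun ω => ENNReal.ofReal (tailDensity μ f α ω)) univ =
      ENNReal.ofReal α := by
    rw [withDensity_apply _ MeasurableSet.univ, Measure.restrict_univ,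
      ← ofReal_integral_eq_lintegral_ofReal hZ.integrable
        (ae_of_all _ fun ω => (hZ.mem_Icc ω).1), hZ.integral_eq]
  have : IsFiniteMeasure (μ.withDensity fun ω => ENNReal.ofReal (tailDensity μ f α ω)) :=
    ⟨hmass ▸ ENNReal.ofReal_lt_top⟩
  refine ext_of_generate_finite _ (borel_eq_generateFrom_Iio ℝ) isPiSystem_Iio ?_ ?_
  · rintro _ ⟨t, rfl⟩
    have hpre : upperQuantile μ f ⁻¹' Iio t ∩ Ioo 0 α =
        Ioo 0 (min α (μ {ω | f ω < t}).toReal) := by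
      ext β
      simp only [mem_inter_iff, mem_preimage, mem_Iio, mem_Ioo, lt_min_iff]
      refine ⟨fun ⟨hβt, hβ0, hβα⟩ => ⟨hβ0, hβα, ?_⟩, fun ⟨hβ0, hβα, hβt⟩ => ⟨?_, hβ0, hβα⟩⟩
      · exact (ENNReal.ofReal_lt_iff_lt_toReal hβ0.le (measure_ne_top _ _)).1
          ((upperQuantile_lt_iff hf hβ0 (hβα.trans hα1)).1 hβt)
      · exact (upperQuantile_lt_iff hf hβ0 (hβα.trans hα1)).2
          ((ENNReal.ofReal_lt_iff_lt_toReal hβ0.le (measure_ne_top _ _)).2 hβt)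
    rw [Measure.map_apply hf measurableSet_Iio, Measure.map_apply_of_aemeasurable hq
      measurableSet_Iio, Measure.restrict_apply' measurableSet_Ioo, hpre, Real.volume_Ioo,
      sub_zero, ENNReal.ofReal_min, ENNReal.ofReal_toReal (measure_ne_top _ _), min_comm]
    exact withDensity_tailDensity_setOf_lt hf hα0 hα1 t
  · rw [Measure.map_apply hf MeasurableSet.univ, Measure.map_apply_of_aemeasurable hq
      MeasurableSet.univ, preimage_univ, preimage_univ, Measure.restrict_apply_univ,
      Real.volume_Ioo, sub_zero, hmass]

theorem setIntegral_upperQuantile :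
    ∫ β in Ioo 0 α, upperQuantile μ f β = ∫ ω, f ω * tailDensity μ f α ω ∂μ := by
  have hZ := isTailDensity_tailDensity (μ := μ) hf hα0 hα1
  calc ∫ β in Ioo 0 α, upperQuantile μ f β
      = ∫ x, x ∂(volume.restrict (Ioo 0 α)).map (upperQuantile μ f) :=
        (integral_map (aemeasurable_upperQuantile hf hα1.le) aestronglyMeasurable_id).symm
    _ = ∫ ω, f ω ∂μ.withDensity fun ω => ENNReal.ofReal (tailDensity μ f α ω) := by
        rw [← map_withDensity_tailDensity hf hα0 hα1]
        exact integral_map hf.aemeasurable aestronglyMeasurable_id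
    _ = ∫ ω, f ω * tailDensity μ f α ω ∂μ := by
        rw [integral_withDensity_eq_integral_toReal_smul hZ.measurable.ennreal_ofReal
          (ae_of_all _ fun _ => ENNReal.ofReal_lt_top)]
        refine integral_congr_ae (ae_of_all _ fun ω => ?_)
        simp [ENNReal.toReal_ofReal (hZ.mem_Icc ω).1, mul_comm]

theorem integral_mul_tailDensity_le (hfi : Integrable f μ) (hZ : IsTailDensity μ α Z) :
    ∫ ω, f ω * tailDensity μ f α ω ∂μ ≤ ∫ ω, f ω * Z ω ∂μ := by
  have hZc := isTailDensity_tailDensity (μ := μ) hf hα0 hα1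
  set v := upperQuantile μ f α
  -- `(f - v) (tailDensity - Z) ≤ 0`, as `tailDensity` is `1` below `v` and `0` above it.
  have hpt : ∀ ω, f ω * tailDensity μ f α ω - f ω * Z ω ≤
      v * tailDensity μ f α ω - v * Z ω := by
    intro ω
    rcases lt_trichotomy (f ω) v with h | h | h
    · have h1 : tailDensity μ f α ω = 1 := by simp [tailDensity, v, h]
      nlinarith [(hZ.mem_Icc ω).2]
    · rw [h]
    · have h0 : tailDensity μ f α ω = 0 := by simp [tailDensity, v, h.not_gt, h.ne']
      nlinarith [(hZ.mem_Icc ω).1]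
  have h : ∫ ω, (f ω * tailDensity μ f α ω - f ω * Z ω) ∂μ ≤
      ∫ ω, (v * tailDensity μ f α ω - v * Z ω) ∂μ :=
    integral_mono ((hZc.integrable_mul hfi).sub (hZ.integrable_mul hfi))
      ((hZc.integrable.const_mul v).sub (hZ.integrable.const_mul v)) hpt
  rw [integral_sub (hZc.integrable_mul hfi) (hZ.integrable_mul hfi),
    integral_sub (hZc.integrable.const_mul v) (hZ.integrable.const_mul v), integral_const_mul,
    integral_const_mul, hZc.integral_eq, hZ.integral_eq, sub_self] at h
  linarith

end TailDensity

section TailDensityOnZeroSet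

variable {Ω : Type*} {mΩ : MeasurableSpace Ω} {μ : Measure Ω} [IsProbabilityMeasure μ]
  {g Z : Ω → ℝ} {α : ℝ}

theorem exists_isTailDensity_mul_eq_zero (hg : Measurable g) (hα0 : 0 < α)
    (h : ENNReal.ofReal α ≤ μ {ω | g ω = 0}) :
    ∃ Z, IsTailDensity μ α Z ∧ ∀ ω, g ω * Z ω = 0 := by
  set s := {ω | g ω = 0}
  have hs : MeasurableSet s := measurableSet_eq_fun hg measurable_const
  have hαs : α ≤ μ.real s := (ENNReal.ofReal_le_iff_le_toReal (measure_ne_top _ _)).1 h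
  have hpos : 0 < μ.real s := hα0.trans_le hαs
  refine ⟨s.indicator fun _ => α / μ.real s, ⟨measurable_const.indicator hs, fun ω => ?_, ?_⟩,
    fun ω => ?_⟩
  · by_cases hω : ω ∈ s
    · simp only [indicator_of_mem hω]
      exact ⟨by positivity, (div_le_one hpos).2 hαs⟩
    · simp [indicator_of_notMem hω]
  · rw [integral_indicator_const _ hs, smul_eq_mul, mul_div_cancel₀ _ hpos.ne']
  · by_cases hω : ω ∈ s
    · rw [show g ω = 0 from hω, zero_mul]
    · rw [indicator_of_notMem hω, mul_zero]

theorem integral_mul_pos_of_measure_eq_zero_lt (hg : Measurable g) (hgi : Integrable g μ)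
    (hg0 : 0 ≤ᵐ[μ] g) (hZ : IsTailDensity μ α Z) (h : μ {ω | g ω = 0} < ENNReal.ofReal α) :
    0 < ∫ ω, g ω * Z ω ∂μ := by
  have hnonneg : 0 ≤ᵐ[μ] fun ω => g ω * Z ω :=
    hg0.mono fun ω hω => mul_nonneg hω (hZ.mem_Icc ω).1
  refine (integral_nonneg_of_ae hnonneg).lt_of_ne fun h0 => ?_
  have hzero := (integral_eq_zero_iff_of_nonneg_ae hnonneg (hZ.integrable_mul hgi)).1 h0.symm
  set s := {ω | g ω = 0}
  have hs : MeasurableSet s := measurableSet_eq_fun hg measurable_const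
  have hZs : Z ≤ᵐ[μ] s.indicator 1 := hzero.mono fun ω hω => by
    by_cases hωs : ω ∈ s
    · simpa [indicator_of_mem hωs] using (hZ.mem_Icc ω).2
    · rw [indicator_of_notMem hωs]
      exact ((mul_eq_zero.1 hω).resolve_left hωs).le
  have hαs : α ≤ μ.real s := by
    calc α = ∫ ω, Z ω ∂μ := hZ.integral_eq.symm
      _ ≤ ∫ ω, s.indicator 1 ω ∂μ :=
        integral_mono_ae hZ.integrable ((integrable_const _).indicator hs) hZs
      _ = μ.real s := by simp [Pi.one_def, integral_indicator_const _ hs]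
  exact h.not_ge ((ENNReal.ofReal_le_iff_le_toReal (measure_ne_top _ _)).2 hαs)

end TailDensityOnZeroSet

theorem integral_norm_le_norm {Ω E : Type*} {mΩ : MeasurableSpace Ω} {μ : Measure Ω}
    [IsProbabilityMeasure μ] [NormedAddCommGroup E] {p : ℝ≥0∞} [Fact (1 ≤ p)]
    (X : Lp E p μ) : ∫ ω, ‖X ω‖ ∂μ ≤ ‖X‖ := by
  rw [integral_norm_eq_lintegral_enorm (Lp.aestronglyMeasurable X), Lp.norm_def,
    ← eLpNorm_one_eq_lintegral_enorm]
  exact ENNReal.toReal_mono (Lp.eLpNorm_ne_top X)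
    (eLpNorm_le_eLpNorm_of_exponent_le Fact.out (Lp.aestronglyMeasurable X))

section AcceptableCapital

variable {E : Type*}

def acceptableCapital [AddCommGroup E] [Module ℝ E] (φ : E → ℝ) (S0 : ℝ) (S x : E) : Set ℝ :=
  {r | φ (x + (r / S0) • S) ≤ 0}

section

variable [AddCommGroup E] [Module ℝ E] {φ : E → ℝ} {S0 : ℝ} {S : E}
  (hφ : ∀ X (c : ℝ), 0 ≤ c → φ (X + c • S) ≤ φ X + c * φ S) (hS : φ S < 0) (hS0 : 0 < S0)
include hφ hS hS0

theorem acceptableCapital_nonempty (x : E) : (acceptableCapital φ S0 S x).Nonempty := by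
  set c := max 0 (φ x / -φ S)
  have hc : φ x ≤ c * -φ S := (div_le_iff₀ (neg_pos.2 hS)).1 (le_max_right _ _)
  refine ⟨S0 * c, ?_⟩
  change φ (x + (S0 * c / S0) • S) ≤ 0
  rw [mul_div_cancel_left₀ _ hS0.ne']
  linarith [hφ x c (le_max_left _ _)]

theorem bddBelow_acceptableCapital (x : E) : BddBelow (acceptableCapital φ S0 S x) := by
  refine ⟨S0 * min 0 (φ x / -φ S), fun r (hr : φ (x + (r / S0) • S) ≤ 0) => ?_⟩
  rcases le_or_gt 0 r with hr0 | hr0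
  · exact (mul_nonpos_of_nonneg_of_nonpos hS0.le (min_le_left _ _)).trans hr0
  · have hx := hφ (x + (r / S0) • S) (-(r / S0))
      (neg_nonneg.2 (div_neg_of_neg_of_pos hr0 hS0).le)
    rw [add_assoc, ← add_smul, add_neg_cancel, zero_smul, add_zero] at hx
    calc S0 * min 0 (φ x / -φ S) ≤ S0 * (r / S0) := by
          refine mul_le_mul_of_nonneg_left ((min_le_right _ _).trans ?_) hS0.le
          rw [div_le_iff₀ (neg_pos.2 hS)]
          linarith
      _ = r := mul_div_cancel₀ _ hS0.ne'

end

variable [SeminormedAddCommGroup E] [Module ℝ E] {φ : E → ℝ} {S0 : ℝ} {S : E} {L : NNReal}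
  (hφ : ∀ X (c : ℝ), 0 ≤ c → φ (X + c • S) ≤ φ X + c * φ S) (hφL : LipschitzWith L φ)
  (hS : φ S < 0) (hS0 : 0 < S0)
include hφ hφL hS hS0

theorem add_mem_acceptableCapital {x y : E} {r : ℝ} (hr : r ∈ acceptableCapital φ S0 S y) :
    r + S0 * L / -φ S * ‖x - y‖ ∈ acceptableCapital φ S0 S x := by
  set d := L * ‖x - y‖ / -φ S
  have hd : d * φ S = -(L * ‖x - y‖) := by
    simp only [d]
    field_simp [hS.ne]
  have hsplit : x + ((r + S0 * L / -φ S * ‖x - y‖) / S0) • S =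
      (y + (r / S0) • S + (x - y)) + d • S := by
    have : (r + S0 * L / -φ S * ‖x - y‖) / S0 = r / S0 + d := by
      simp only [d]
      field_simp
    rw [this, add_smul]
    abel
  have hlip : φ (y + (r / S0) • S + (x - y)) ≤ φ (y + (r / S0) • S) + L * ‖x - y‖ := by
    have h := hφL.dist_le_mul (y + (r / S0) • S + (x - y)) (y + (r / S0) • S)
    rw [Real.dist_eq, dist_self_add_left] at h
    linarith [le_abs_self (φ (y + (r / S0) • S + (x - y)) - φ (y + (r / S0) • S))]
  have hr' : φ (y + (r / S0) • S) ≤ 0 := hr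
  change φ (x + ((r + S0 * L / -φ S * ‖x - y‖) / S0) • S) ≤ 0
  rw [hsplit]
  linarith [hφ (y + (r / S0) • S + (x - y)) d (div_nonneg (by positivity) (neg_pos.2 hS).le)]

theorem lipschitzWith_sInf_acceptableCapital :
    LipschitzWith (Real.toNNReal (S0 * L / -φ S)) fun x => sInf (acceptableCapital φ S0 S x) :=
  LipschitzWith.of_le_add_mul' _ fun x y => by
    have h := le_csInf (acceptableCapital_nonempty hφ hS hS0 y) fun r hr =>
      sub_le_iff_le_add.2 (csInf_le (bddBelow_acceptableCapital hφ hS hS0 x)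
        (add_mem_acceptableCapital hφ hφL hS hS0 hr))
    rw [dist_eq_norm]
    linarith

end AcceptableCapital

variable {Ω : Type*} [MeasureSpace Ω] [IsProbabilityMeasure (volume : Measure Ω)]

/-- Value-at-Risk at level β. -/
noncomputable def VaR (p : ℝ≥0∞) [Fact (1 ≤ p)]
    (f : Lp ℝ p (volume : Measure Ω)) (β : ℝ) : ℝ :=
  sInf {m : ℝ | volume {ω | f ω + m < 0} ≤ ENNReal.ofReal β}

/-- Tail Value-at-Risk at level α. -/
noncomputable def TVaR (p : ℝ≥0∞) [Fact (1 ≤ p)] (α : ℝ)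
    (f : Lp ℝ p (volume : Measure Ω)) : ℝ :=
  (1 / α) * ∫ β in (0 : ℝ)..α, VaR p f β

/-- The TVaR acceptance set at level α. -/
noncomputable def tvarAcc (p : ℝ≥0∞) [Fact (1 ≤ p)] (α : ℝ) :
    Set (Lp ℝ p (volume : Measure Ω)) :=
  {f | TVaR p α f ≤ 0}

/-- The risk measure ρ_{A,S}. -/
noncomputable def rho (p : ℝ≥0∞) [Fact (1 ≤ p)] (A : Set (Lp ℝ p (volume : Measure Ω)))
    (S0 : ℝ) (ST : Lp ℝ p (volume : Measure Ω)) (x : Lp ℝ p (volume : Measure Ω)) : EReal :=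
  sInf ((fun r : ℝ => (r : EReal)) '' {r : ℝ | x + (r / S0) • ST ∈ A})

section TVaR

variable {p : ℝ≥0∞} [Fact (1 ≤ p)]

omit [IsProbabilityMeasure (volume : Measure Ω)] in
theorem VaR_eq_neg_upperQuantile (X : Lp ℝ p (volume : Measure Ω)) (β : ℝ) :
    VaR p X β = -upperQuantile volume X β := by
  rw [VaR, Real.sInf_def, upperQuantile]
  congr 2
  ext t
  simp only [Set.mem_neg, mem_ofPred_eq, ← sub_eq_add_neg, sub_neg]

variable {α : ℝ} (hα0 : 0 < α) (hα1 : α < 1)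
include hα0 hα1

theorem TVaR_eq_neg_integral_mul_tailDensity (X : Lp ℝ p (volume : Measure Ω)) :
    TVaR p α X = -(1 / α) * ∫ ω, X ω * tailDensity volume X α ω := by
  rw [TVaR, intervalIntegral.integral_of_le hα0.le, integral_Ioc_eq_integral_Ioo]
  simp_rw [VaR_eq_neg_upperQuantile]
  rw [integral_neg, setIntegral_upperQuantile (Lp.stronglyMeasurable X).measurable hα0 hα1]
  ring

theorem neg_integral_mul_le_TVaR (X : Lp ℝ p (volume : Measure Ω)) {Z : Ω → ℝ}
    (hZ : IsTailDensity volume α Z) : -(1 / α) * ∫ ω, X ω * Z ω ≤ TVaR p α X := by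
  rw [TVaR_eq_neg_integral_mul_tailDensity hα0 hα1]
  exact mul_le_mul_of_nonpos_left (integral_mul_tailDensity_le
    (Lp.stronglyMeasurable X).measurable hα0 hα1 ((Lp.memLp X).integrable Fact.out) hZ)
    (by simp [hα0.le])

theorem TVaR_add_smul_le (X Y : Lp ℝ p (volume : Measure Ω)) {c : ℝ} (hc : 0 ≤ c) :
    TVaR p α (X + c • Y) ≤ TVaR p α X + c * TVaR p α Y := by
  set Z := tailDensity volume (X + c • Y) α
  have hZ : IsTailDensity volume α Z :=
    isTailDensity_tailDensity (Lp.stronglyMeasurable _).measurable hα0 hα1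
  have hsplit : ∫ ω, (X + c • Y) ω * Z ω = (∫ ω, X ω * Z ω) + c * ∫ ω, Y ω * Z ω := by
    rw [← integral_const_mul,
      ← integral_add (hZ.integrable_mul ((Lp.memLp X).integrable Fact.out))
        ((hZ.integrable_mul ((Lp.memLp Y).integrable Fact.out)).const_mul c)]
    refine integral_congr_ae ?_
    filter_upwards [Lp.coeFn_add X (c • Y), Lp.coeFn_smul c Y] with ω h₁ h₂
    rw [h₁, Pi.add_apply, h₂, Pi.smul_apply, smul_eq_mul]
    ring
  calc TVaR p α (X + c • Y)
      = -(1 / α) * (∫ ω, X ω * Z ω) + c * (-(1 / α) * ∫ ω, Y ω * Z ω) := by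
        rw [TVaR_eq_neg_integral_mul_tailDensity hα0 hα1, hsplit]
        ring
    _ ≤ TVaR p α X + c * TVaR p α Y :=
        add_le_add (neg_integral_mul_le_TVaR hα0 hα1 X hZ)
          (mul_le_mul_of_nonneg_left (neg_integral_mul_le_TVaR hα0 hα1 Y hZ) hc)

theorem TVaR_le_inv_mul_norm (X : Lp ℝ p (volume : Measure Ω)) : TVaR p α X ≤ α⁻¹ * ‖X‖ := by
  have hZ : IsTailDensity volume α (tailDensity volume X α) :=
    isTailDensity_tailDensity (Lp.stronglyMeasurable X).measurable hα0 hα1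
  have hbound : ‖∫ ω, X ω * tailDensity volume X α ω‖ ≤ ∫ ω, ‖X ω‖ :=
    norm_integral_le_of_norm_le ((Lp.memLp X).integrable Fact.out).norm
      (ae_of_all _ fun ω => by
        rw [norm_mul]
        exact mul_le_of_le_one_right (norm_nonneg _)
          (by simpa [abs_of_nonneg (hZ.mem_Icc ω).1] using (hZ.mem_Icc ω).2))
  rw [TVaR_eq_neg_integral_mul_tailDensity hα0 hα1, one_div, neg_mul, ← mul_neg]
  refine mul_le_mul_of_nonneg_left ?_ (inv_nonneg.2 hα0.le)
  exact (neg_le_abs _).trans (hbound.trans (integral_norm_le_norm X))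

theorem lipschitzWith_TVaR : LipschitzWith (Real.toNNReal α⁻¹) (TVaR (Ω := Ω) p α) :=
  LipschitzWith.of_le_add_mul' _ fun X Y => by
    have h := TVaR_add_smul_le hα0 hα1 Y (X - Y) zero_le_one
    rw [one_smul, add_sub_cancel, one_mul] at h
    rw [dist_eq_norm]
    linarith [TVaR_le_inv_mul_norm hα0 hα1 (X - Y)]

theorem TVaR_neg_of_measure_eq_zero_lt {Y : Lp ℝ p (volume : Measure Ω)} (hY : 0 ≤ Y)
    (h : volume {ω | Y ω = 0} < ENNReal.ofReal α) : TVaR p α Y < 0 := by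
  have hYm := (Lp.stronglyMeasurable Y).measurable
  rw [TVaR_eq_neg_integral_mul_tailDensity hα0 hα1]
  exact mul_neg_of_neg_of_pos (by simp [hα0]) (integral_mul_pos_of_measure_eq_zero_lt hYm
    ((Lp.memLp Y).integrable Fact.out) ((Lp.coeFn_nonneg Y).2 hY)
    (isTailDensity_tailDensity hYm hα0 hα1) h)

theorem neg_le_TVaR_const_add_smul {Y : Lp ℝ p (volume : Measure Ω)}
    (h : ENNReal.ofReal α ≤ volume {ω | Y ω = 0}) (m c : ℝ) :
    -m ≤ TVaR p α (Lp.const p volume m + c • Y) := by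
  obtain ⟨Z, hZ, hYZ⟩ :=
    exists_isTailDensity_mul_eq_zero (Lp.stronglyMeasurable Y).measurable hα0 h
  have hint : ∫ ω, (Lp.const p volume m + c • Y : Lp ℝ p (volume : Measure Ω)) ω * Z ω =
      m * α := by
    rw [← hZ.integral_eq, ← integral_const_mul]
    refine integral_congr_ae ?_
    filter_upwards [Lp.coeFn_add (Lp.const p volume m) (c • Y), Lp.coeFn_const p volume m,
      Lp.coeFn_smul c Y] with ω h₁ h₂ h₃
    rw [h₁, Pi.add_apply, h₂, h₃, Pi.smul_apply, smul_eq_mul, Function.const_apply, add_mul,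
      mul_assoc, hYZ, mul_zero, add_zero]
  have h := neg_integral_mul_le_TVaR hα0 hα1 (Lp.const p volume m + c • Y) hZ
  rwa [hint, show -(1 / α) * (m * α) = -m by field_simp] at h

theorem rho_tvarAcc_eq_top {S0 : ℝ} {ST : Lp ℝ p (volume : Measure Ω)}
    (h : ENNReal.ofReal α ≤ volume {ω | ST ω = 0}) :
    rho p (tvarAcc p α) S0 ST (Lp.const p volume (-1)) = ⊤ := by
  rw [rho, sInf_eq_top]
  rintro _ ⟨r, hr, rfl⟩
  have h1 := neg_le_TVaR_const_add_smul hα0 hα1 h (-1) (r / S0)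
  have h2 : TVaR p α (Lp.const p volume (-1) + (r / S0) • ST) ≤ 0 := hr
  linarith

theorem rho_tvarAcc_eq_coe_sInf {S0 : ℝ} (hS0 : 0 < S0) {ST : Lp ℝ p (volume : Measure Ω)}
    (hST : TVaR p α ST < 0) (x : Lp ℝ p (volume : Measure Ω)) :
    rho p (tvarAcc p α) S0 ST x = (sInf (acceptableCapital (TVaR p α) S0 ST x) : ℝ) :=
  (Monotone.map_csInf_of_continuousAt continuous_coe_real_ereal.continuousAt
    EReal.coe_strictMono.monotone
    (acceptableCapital_nonempty (fun X _ hc => TVaR_add_smul_le hα0 hα1 X ST hc) hST hS0 x)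
    (bddBelow_acceptableCapital (fun X _ hc => TVaR_add_smul_le hα0 hα1 X ST hc) hST hS0 x)).symm

end TVaR

theorem rho_tvarAcc_tfae_general (p : ℝ≥0∞) [Fact (1 ≤ p)]
    (α : ℝ) (hα : α ∈ Set.Ioo (0 : ℝ) 1)
    (S0 : ℝ) (hS0 : 0 < S0)
    (ST : Lp ℝ p (volume : Measure Ω)) (hST : 0 ≤ ST) :
    ((∀ x, rho p (tvarAcc (Ω := Ω) p α) S0 ST x ≠ ⊤ ∧
        rho p (tvarAcc (Ω := Ω) p α) S0 ST x ≠ ⊥) ↔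
      volume {ω | ST ω = 0} < ENNReal.ofReal α) ∧
    ((∃ (K : NNReal) (r : Lp ℝ p (volume : Measure Ω) → ℝ), LipschitzWith K r ∧
        ∀ x, rho p (tvarAcc (Ω := Ω) p α) S0 ST x = (r x : EReal)) ↔
      volume {ω | ST ω = 0} < ENNReal.ofReal α) ∧
    (TVaR p α ST < 0 ↔ volume {ω | ST ω = 0} < ENNReal.ofReal α) := by
  obtain ⟨hα0, hα1⟩ := hα
  have htop : ¬ volume {ω | ST ω = 0} < ENNReal.ofReal α →
      rho p (tvarAcc p α) S0 ST (Lp.const p volume (-1)) = ⊤ :=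
    fun h => rho_tvarAcc_eq_top hα0 hα1 (not_lt.1 h)
  have hreal := rho_tvarAcc_eq_coe_sInf hα0 hα1 hS0 (ST := ST)
  -- `(c) → (d)`: otherwise `ρ(-1)` would be both real and `+∞`.
  have hcd : TVaR p α ST < 0 ↔ volume {ω | ST ω = 0} < ENNReal.ofReal α :=
    ⟨fun hc => by_contra fun hd => EReal.coe_ne_top _ ((hreal hc _).symm.trans (htop hd)),
      TVaR_neg_of_measure_eq_zero_lt hα0 hα1 hST⟩
  refine ⟨⟨fun ha => by_contra fun hd => (ha _).1 (htop hd), fun hd x => ?_⟩,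
    ⟨fun ⟨_, r, _, hr⟩ => by_contra fun hd => EReal.coe_ne_top _ ((hr _).symm.trans (htop hd)),
      fun hd => ⟨_, _, lipschitzWith_sInf_acceptableCapital
        (fun X _ hc => TVaR_add_smul_le hα0 hα1 X ST hc) (lipschitzWith_TVaR hα0 hα1)
        (hcd.2 hd) hS0, hreal (hcd.2 hd)⟩⟩, hcd⟩
  rw [hreal (hcd.2 hd)]
  exact ⟨EReal.coe_ne_top _, EReal.coe_ne_bot _⟩

/-- for the TVaR-based risk measure on Lᵖ (1 ≤ p < ∞) over a nonatomic
probability space, the following are equivalent: (a) finiteness, (b) Lipschitz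
continuity, (c) TVaR_α(S_T) < 0, (d) P(S_T = 0) < α. -/
theorem rho_tvarAcc_tfae (p : ℝ≥0∞) [Fact (1 ≤ p)] (hp : p ≠ ∞)
    (hna : ∀ s : Set Ω, MeasurableSet s → 0 < volume s →
      ∃ t ⊆ s, MeasurableSet t ∧ 0 < volume t ∧ volume t < volume s)
    (α : ℝ) (hα : α ∈ Set.Ioo (0 : ℝ) 1)
    (S0 : ℝ) (hS0 : 0 < S0)
    (ST : Lp ℝ p (volume : Measure Ω)) (hST : 0 ≤ ST) (hSTne : ST ≠ 0) :
    ((∀ x, rho p (tvarAcc (Ω := Ω) p α) S0 ST x ≠ ⊤ ∧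
        rho p (tvarAcc (Ω := Ω) p α) S0 ST x ≠ ⊥) ↔
      volume {ω | ST ω = 0} < ENNReal.ofReal α) ∧
    ((∃ (K : NNReal) (r : Lp ℝ p (volume : Measure Ω) → ℝ), LipschitzWith K r ∧
        ∀ x, rho p (tvarAcc (Ω := Ω) p α) S0 ST x = (r x : EReal)) ↔
      volume {ω | ST ω = 0} < ENNReal.ofReal α) ∧
    (TVaR p α ST < 0 ↔ volume {ω | ST ω = 0} < ENNReal.ofReal α) :=
  rho_tvarAcc_tfae_general p α hα S0 hS0 ST hST
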